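/- Let n ≥ 2 be an even integer, let d_n^{−1} = n(n−2)⋯2, and let R > 0. Then for every Schwartz function φ ∈ 𝒮(ℝⁿ), d_n · ((1/R)(∂/∂R))^{(n−2)/2} ( (1/v_n) ∫_{B(0,R)} (R² − |x|²)^{−1/2} φ̂(x) dx ) = ∫_{ℝⁿ} (sin(R|ξ|)/|ξ|) · φ(ξ) dξ, where sin(R|ξ|)/|ξ| is interpreted as R at ξ = 0. -/

import Mathlib

open MeasureTheory Metric
open scoped Classical

/-- The Lebesgue volume of the unit ball in `ℝ^k`. -/
noncomputable def unitBallVol (k : ℕ) : ℝ :=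
  (volume (ball (0 : EuclideanSpace ℝ (Fin k)) 1)).toReal

/-- The operator `(1/R)(∂/∂R)` acting on complex-valued functions of `R`. -/
noncomputable def invRDerivC : (ℝ → ℂ) → (ℝ → ℂ) := fun g r => deriv g r / r

/-- The Fourier transform `φ̂(ξ) = ∫_{ℝⁿ} φ(x) e^{−i x·ξ} dx`. -/
noncomputable def fourierTf {n : ℕ} (φ : EuclideanSpace ℝ (Fin n) → ℂ)
    (ξ : EuclideanSpace ℝ (Fin n)) : ℂ :=
  ∫ x, φ x * Complex.exp (-Complex.I * ((inner ℝ x ξ : ℝ) : ℂ))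

/-!
Write `n = 2m + 2`. For `ρ > 0` the weight `w_ρ(x) = (ρ² - |x|²)₊^{-1/2}` is integrable (in Lean it
is `1 / √(ρ ^ 2 - ‖x‖ ^ 2)`, which vanishes off the ball since `√` is `0` on negatives and
`1 / 0 = 0`), so by Fubini the ball integral of `w_ρ φ̂` equals `∫ φ(ξ) ŵ_ρ(ξ) dξ`. Rotating `ξ`
onto the first axis and slicing `ℝⁿ = ℝ × ℝⁿ⁻¹`, using `∫_{ℝᵖ⁺¹} (c - |y|²)₊^{-1/2} dy =
π vol(B_p(0, √c))` (slice once more down to the arcsine integral), gives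
`ŵ_ρ(ξ) = π v_{2m} G_m(|ξ|, ρ)` with `G_j(k, ρ) = ∫_{-ρ}^{ρ} (ρ² - t²)^j e^{-ikt} dt`
(`fourierTruncPow j k ρ`).
Rescaling to `[-1, 1]` and integrating by parts shows `∂_ρ G_{j+1} = 2(j+1) ρ G_j`, so each
application of `(1/R) ∂_R` lowers `j` by one, leaving `2^m m! G_0(k, R) = 2^{m+1} m! sin(kR)/k`.
With `π v_{2m} / v_{2m+2} = m + 1` and `d_n = 1 / (2^{m+1} (m+1)!)` all constants cancel.
-/

namespace TRFourier

open Set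

lemma one_div_sqrt_of_nonpos {a : ℝ} (ha : a ≤ 0) : 1 / √a = 0 := by
  rw [Real.sqrt_eq_zero'.2 ha, div_zero]

lemma hasDerivAt_arcsin_div {r t : ℝ} (hr : 0 < r) (ht : t ∈ Ioo (-r) r) :
    HasDerivAt (fun s => Real.arcsin (s / r)) (1 / √(r ^ 2 - t ^ 2)) t := by
  obtain ⟨h1, h2⟩ := ht
  have hne : t / r ≠ -1 := by rw [Ne, div_eq_iff hr.ne']; linarith
  have hne' : t / r ≠ 1 := by rw [Ne, div_eq_iff hr.ne']; linarith
  refine ((Real.hasDerivAt_arcsin hne hne').comp t ((hasDerivAt_id t).div_const r)).congr_deriv ?_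
  rw [show r ^ 2 - t ^ 2 = r ^ 2 * (1 - (t / r) ^ 2) by field_simp, Real.sqrt_mul (by positivity),
    Real.sqrt_sq hr.le]
  field_simp

lemma integrableOn_one_div_sqrt_sub_sq {r : ℝ} (hr : 0 < r) :
    IntegrableOn (fun t : ℝ => 1 / √(r ^ 2 - t ^ 2)) (Ioc (-r) r) :=
  intervalIntegral.integrableOn_deriv_of_nonneg
    (Real.continuous_arcsin.comp (continuous_id.div_const r)).continuousOn
    (fun _ ht => hasDerivAt_arcsin_div hr ht) (fun _ _ => by positivity)

lemma intervalIntegral_one_div_sqrt_sub_sq {r : ℝ} (hr : 0 < r) :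
    ∫ t in -r..r, 1 / √(r ^ 2 - t ^ 2) = Real.pi := by
  rw [intervalIntegral.integral_eq_sub_of_hasDeriv_right_of_le (by linarith)
    (Real.continuous_arcsin.comp (continuous_id.div_const r)).continuousOn
    (fun _ ht => (hasDerivAt_arcsin_div hr ht).hasDerivWithinAt)
    ((intervalIntegrable_iff_integrableOn_Ioc_of_le (by linarith)).2
      (integrableOn_one_div_sqrt_sub_sq hr))]
  simp [neg_div, div_self hr.ne']

lemma one_div_sqrt_sub_sq_eq_zero {r t : ℝ} (hr : 0 ≤ r) (ht : t ∉ Ioc (-r) r) :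
    1 / √(r ^ 2 - t ^ 2) = 0 := by
  apply one_div_sqrt_of_nonpos
  simp only [mem_Ioc, not_and_or, not_lt, not_le] at ht
  rcases ht with h | h <;> nlinarith

lemma integrable_one_div_sqrt_sub_sq (a : ℝ) :
    Integrable (fun t : ℝ => 1 / √(a - t ^ 2)) := by
  rcases le_or_gt a 0 with ha | ha
  · rw [funext fun t => one_div_sqrt_of_nonpos (by nlinarith [sq_nonneg t] : a - t ^ 2 ≤ 0)]
    exact integrable_zero _ _ _
  · rw [← Real.sq_sqrt ha.le]
    exact (integrableOn_one_div_sqrt_sub_sq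
      (Real.sqrt_pos.2 ha)).integrable_of_forall_notMem_eq_zero
        fun t ht => one_div_sqrt_sub_sq_eq_zero (Real.sqrt_nonneg a) ht

lemma integral_one_div_sqrt_sub_sq (a : ℝ) :
    ∫ t : ℝ, 1 / √(a - t ^ 2) = if 0 < a then Real.pi else 0 := by
  split_ifs with ha
  · rw [← Real.sq_sqrt ha.le, ← setIntegral_eq_integral_of_forall_compl_eq_zero
      fun t ht => one_div_sqrt_sub_sq_eq_zero (Real.sqrt_nonneg a) ht,
      ← intervalIntegral.integral_of_le (by simp [Real.sqrt_nonneg]),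
      intervalIntegral_one_div_sqrt_sub_sq (Real.sqrt_pos.2 ha)]
  · rw [funext fun t => one_div_sqrt_of_nonpos (by nlinarith [sq_nonneg t] : a - t ^ 2 ≤ 0)]
    exact integral_zero _ _

noncomputable def consEquiv (p : ℕ) :
    ℝ × EuclideanSpace ℝ (Fin p) ≃ᵐ EuclideanSpace ℝ (Fin (p + 1)) :=
  (((MeasurableEquiv.refl ℝ).prodCongr (MeasurableEquiv.toLp 2 (Fin p → ℝ)).symm).trans
    (MeasurableEquiv.piFinSuccAbove (fun _ => ℝ) 0).symm).trans (MeasurableEquiv.toLp 2 _)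

lemma measurePreserving_consEquiv (p : ℕ) : MeasurePreserving (consEquiv p) := by
  have h1 := (MeasurePreserving.id (volume : Measure ℝ)).prod
    (EuclideanSpace.volume_preserving_symm_measurableEquiv_toLp (Fin p))
  have h2 := (volume_preserving_piFinSuccAbove (fun _ : Fin (p + 1) => ℝ) 0).symm
  have h3 := (EuclideanSpace.volume_preserving_symm_measurableEquiv_toLp (Fin (p + 1))).symm
  rw [Measure.volume_eq_prod]
  exact h3.comp (h2.comp h1)

lemma consEquiv_apply (p : ℕ) (q : ℝ × EuclideanSpace ℝ (Fin p)) :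
    consEquiv p q = WithLp.toLp 2 (Fin.cons q.1 q.2) := by
  simp only [consEquiv, MeasurableEquiv.piFinSuccAbove, Fin.insertNthEquiv_zero,
    MeasurableEquiv.symm_mk, Equiv.symm_symm, MeasurableEquiv.trans_apply, MeasurableEquiv.coe_mk,
    MeasurableEquiv.toLp_apply, WithLp.toLp.injEq]
  rfl

lemma consEquiv_apply_zero (p : ℕ) (q : ℝ × EuclideanSpace ℝ (Fin p)) :
    consEquiv p q 0 = q.1 := by
  simp [consEquiv_apply]

lemma norm_consEquiv_sq (p : ℕ) (q : ℝ × EuclideanSpace ℝ (Fin p)) :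
    ‖consEquiv p q‖ ^ 2 = q.1 ^ 2 + ‖q.2‖ ^ 2 := by
  simp [consEquiv_apply, EuclideanSpace.norm_sq_eq, Fin.sum_univ_succ]

lemma integral_one_div_sqrt_sub_norm_consEquiv_sq {p : ℕ} (c : ℝ) (y : EuclideanSpace ℝ (Fin p)) :
    ∫ t : ℝ, 1 / √(c - ‖consEquiv p (t, y)‖ ^ 2) =
      (ball (0 : EuclideanSpace ℝ (Fin p)) √c).indicator (fun _ => Real.pi) y := by
  simp_rw [norm_consEquiv_sq, sub_add_eq_sub_sub_swap]
  simp only [integral_one_div_sqrt_sub_sq, indicator_apply, mem_ball_zero_iff,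
    Real.lt_sqrt (norm_nonneg y), sub_pos]

lemma integrable_one_div_sqrt_sub_norm_sq (p : ℕ) (c : ℝ) :
    Integrable (fun x : EuclideanSpace ℝ (Fin (p + 1)) => 1 / √(c - ‖x‖ ^ 2)) := by
  rw [← (measurePreserving_consEquiv p).integrable_comp_emb (consEquiv p).measurableEmbedding,
    Measure.volume_eq_prod, integrable_prod_iff' (by fun_prop : Measurable _).aestronglyMeasurable]
  refine ⟨ae_of_all _ fun y => ?_, ?_⟩
  · simp_rw [Function.comp_apply, norm_consEquiv_sq, sub_add_eq_sub_sub_swap]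
    exact integrable_one_div_sqrt_sub_sq _
  · simp_rw [Function.comp_apply, Real.norm_of_nonneg (one_div_nonneg.2 (Real.sqrt_nonneg _)),
      integral_one_div_sqrt_sub_norm_consEquiv_sq]
    exact (integrable_indicator_iff measurableSet_ball).2
      (integrableOn_const measure_ball_lt_top.ne)

lemma integral_one_div_sqrt_sub_norm_sq (p : ℕ) (c : ℝ) :
    ∫ x : EuclideanSpace ℝ (Fin (p + 1)), 1 / √(c - ‖x‖ ^ 2) =
      Real.pi * volume.real (ball (0 : EuclideanSpace ℝ (Fin p)) √c) := by
  have hint := (measurePreserving_consEquiv p).integrable_comp_emb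
    (consEquiv p).measurableEmbedding |>.2 (integrable_one_div_sqrt_sub_norm_sq p c)
  rw [Measure.volume_eq_prod, Function.comp_def] at hint
  rw [← (measurePreserving_consEquiv p).integral_comp', Measure.volume_eq_prod,
    integral_prod_symm _ hint]
  simp_rw [integral_one_div_sqrt_sub_norm_consEquiv_sq]
  rw [integral_indicator measurableSet_ball, setIntegral_const, smul_eq_mul, mul_comm]

lemma volume_real_ball_eq_unitBallVol_mul (k : ℕ) {r : ℝ} (hr : 0 < r) :
    volume.real (ball (0 : EuclideanSpace ℝ (Fin k)) r) = unitBallVol k * r ^ k := by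
  rw [measureReal_def, Measure.addHaar_ball_of_pos _ _ hr, ENNReal.toReal_mul,
    ENNReal.toReal_ofReal (by positivity), finrank_euclideanSpace_fin, unitBallVol, mul_comm]

open scoped Nat in
lemma unitBallVol_two_mul (m : ℕ) : unitBallVol (2 * m) = Real.pi ^ m / m ! := by
  rcases m.eq_zero_or_pos with rfl | hm
  · have : ball (0 : EuclideanSpace ℝ (Fin (2 * 0))) 1 = univ :=
      eq_univ_of_forall fun y => by simp [EuclideanSpace.norm_eq]
    simp [unitBallVol, this, volume_euclideanSpace_eq_dirac]
  · have : Nontrivial (EuclideanSpace ℝ (Fin (2 * m))) := by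
      have : Nonempty (Fin (2 * m)) := ⟨⟨0, by omega⟩⟩
      infer_instance
    rw [unitBallVol, InnerProductSpace.volume_ball_of_dim_even (k := m) (by simp)]
    simp [Real.pi_nonneg, div_nonneg, pow_nonneg]

open scoped Nat in
lemma pi_mul_unitBallVol_div (m : ℕ) :
    Real.pi * unitBallVol (2 * m) / unitBallVol (2 * m + 2) = m + 1 := by
  rw [unitBallVol_two_mul, show 2 * m + 2 = 2 * (m + 1) by ring, unitBallVol_two_mul,
    Nat.factorial_succ]
  push_cast
  field_simp [Real.pi_pos.ne']
  ring

lemma integral_one_div_sqrt_sub_norm_sq_mul_apply_zero (p : ℕ) {ρ : ℝ} (hρ : 0 ≤ ρ) {g : ℝ → ℂ}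
    (hg : Continuous g) {C : ℝ} (hC : ∀ t, ‖g t‖ ≤ C) :
    ∫ x : EuclideanSpace ℝ (Fin (p + 2)), ((1 / √(ρ ^ 2 - ‖x‖ ^ 2) : ℝ) : ℂ) * g (x 0) =
      Real.pi * unitBallVol p * ∫ t in -ρ..ρ, ((√(ρ ^ 2 - t ^ 2) ^ p : ℝ) : ℂ) * g t := by
  have hint : Integrable (fun q : ℝ × EuclideanSpace ℝ (Fin (p + 1)) =>
      ((1 / √(ρ ^ 2 - ‖consEquiv (p + 1) q‖ ^ 2) : ℝ) : ℂ) * g (consEquiv (p + 1) q 0))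
      (volume.prod volume) := by
    rw [← Measure.volume_eq_prod]
    exact (measurePreserving_consEquiv (p + 1)).integrable_comp_emb
      (consEquiv _).measurableEmbedding |>.2 <|
      (integrable_one_div_sqrt_sub_norm_sq (p + 1) (ρ ^ 2)).ofReal.mul_bdd
        (hg.comp (by fun_prop)).aestronglyMeasurable (ae_of_all _ fun x => hC (x 0))
  rw [← (measurePreserving_consEquiv (p + 1)).integral_comp', Measure.volume_eq_prod,
    integral_prod _ hint]
  simp_rw [consEquiv_apply_zero, norm_consEquiv_sq, ← sub_sub, integral_mul_const,
    integral_complex_ofReal, integral_one_div_sqrt_sub_norm_sq]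
  rw [← setIntegral_eq_integral_of_forall_compl_eq_zero (s := Ioo (-ρ) ρ) ?_,
    intervalIntegral.integral_of_le (by linarith), integral_Ioc_eq_integral_Ioo,
    ← integral_const_mul]
  · refine setIntegral_congr_fun measurableSet_Ioo fun t ht => ?_
    have : 0 < ρ ^ 2 - t ^ 2 := by nlinarith [ht.1, ht.2]
    rw [volume_real_ball_eq_unitBallVol_mul p (Real.sqrt_pos.2 this)]
    push_cast
    ring
  · intro t ht
    have : ρ ^ 2 - t ^ 2 ≤ 0 := by
      simp only [mem_Ioo, not_and_or, not_lt] at ht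
      rcases ht with h | h <;> nlinarith
    simp [Real.sqrt_eq_zero'.2 this]

lemma integral_comp_norm_inner {F : Type*} [NormedAddCommGroup F] [NormedSpace ℝ F] {N : ℕ}
    (f : ℝ → ℝ → F) (ξ : EuclideanSpace ℝ (Fin (N + 1))) :
    ∫ x : EuclideanSpace ℝ (Fin (N + 1)), f ‖x‖ (inner ℝ x ξ) =
      ∫ x : EuclideanSpace ℝ (Fin (N + 1)), f ‖x‖ (‖ξ‖ * x 0) := by
  set ξ₀ : EuclideanSpace ℝ (Fin (N + 1)) := ‖ξ‖ • EuclideanSpace.single 0 1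
  have hnorm : ‖ξ‖ = ‖ξ₀‖ := by simp [ξ₀, norm_smul]
  set e := Submodule.reflection (Submodule.span ℝ {ξ - ξ₀})ᗮ
  have he : e ξ = ξ₀ := Submodule.reflection_sub hnorm
  rw [← e.measurePreserving.integral_comp e.toHomeomorph.measurableEmbedding]
  refine integral_congr_ae (ae_of_all _ fun x => ?_)
  have : inner ℝ (e x) ξ = inner ℝ x ξ₀ := by
    rw [← e.inner_map_map, Submodule.reflection_reflection, he]
  simp [this, ξ₀, real_inner_smul_right, EuclideanSpace.inner_single_right]

lemma norm_exp_neg_I_mul_ofReal (s : ℝ) : ‖Complex.exp (-Complex.I * s)‖ = 1 := by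
  rw [Complex.norm_exp]; simp

lemma integral_mul_fourierTf {n : ℕ} {f g : EuclideanSpace ℝ (Fin n) → ℂ} (hf : Integrable f)
    (hg : Integrable g) : ∫ x, f x * fourierTf g x = ∫ ξ, g ξ * fourierTf f ξ := by
  have hint : Integrable (Function.uncurry fun x y : EuclideanSpace ℝ (Fin n) =>
      f x * (g y * Complex.exp (-Complex.I * (inner ℝ y x : ℝ)))) (volume.prod volume) := by
    refine ((hf.mul_prod hg).mul_bdd
      (g := fun p => Complex.exp (-Complex.I * (inner ℝ p.2 p.1 : ℝ))) (by fun_prop)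
      (ae_of_all _ fun _ => (norm_exp_neg_I_mul_ofReal _).le)).congr (ae_of_all _ fun p => ?_)
    simp only [Function.uncurry_def, mul_assoc]
  simp only [fourierTf, ← integral_const_mul]
  rw [integral_integral_swap hint]
  refine integral_congr_ae (ae_of_all _ fun ξ => integral_congr_ae (ae_of_all _ fun x => ?_))
  simp only [real_inner_comm x ξ]
  ring

noncomputable def fourierTruncPow (j : ℕ) (k ρ : ℝ) : ℂ :=
  ∫ t in -ρ..ρ, (((ρ ^ 2 - t ^ 2) ^ j : ℝ) : ℂ) * Complex.exp (-Complex.I * (k * t : ℝ))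

lemma fourierTruncPow_eq_mul_one (j : ℕ) (k ρ : ℝ) :
    fourierTruncPow j k ρ = (ρ : ℂ) ^ (2 * j + 1) * fourierTruncPow j (k * ρ) 1 := by
  have hscale := intervalIntegral.smul_integral_comp_mul_left (a := -1) (b := 1)
    (fun t => (((ρ ^ 2 - t ^ 2) ^ j : ℝ) : ℂ) * Complex.exp (-Complex.I * (k * t : ℝ))) ρ
  rw [mul_neg, mul_one] at hscale
  rw [fourierTruncPow, ← hscale, fourierTruncPow, ← intervalIntegral.integral_smul,
    ← intervalIntegral.integral_const_mul]
  refine intervalIntegral.integral_congr fun t _ => ?_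
  have : ρ ^ 2 - (ρ * t) ^ 2 = ρ ^ 2 * (1 ^ 2 - t ^ 2) := by ring
  rw [this, mul_pow, ← pow_mul, Complex.real_smul]
  push_cast
  ring_nf

lemma abs_one_sub_sq_pow_le_one {t : ℝ} (ht : t ∈ uIoc (-1 : ℝ) 1) (j : ℕ) :
    |(1 ^ 2 - t ^ 2) ^ j| ≤ 1 := by
  rw [uIoc_of_le (by norm_num)] at ht
  exact abs_pow (1 ^ 2 - t ^ 2) j ▸ pow_le_one₀ (abs_nonneg _)
    (abs_le.2 ⟨by nlinarith [ht.1, ht.2], by nlinarith⟩)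

lemma norm_fourierTruncPow_one_le (j : ℕ) (s : ℝ) : ‖fourierTruncPow j s 1‖ ≤ 2 := by
  have hbound : ∀ t ∈ uIoc (-1 : ℝ) 1,
      ‖(((1 ^ 2 - t ^ 2) ^ j : ℝ) : ℂ) * Complex.exp (-Complex.I * (s * t : ℝ))‖ ≤ 1 := by
    intro t ht
    rw [norm_mul, norm_exp_neg_I_mul_ofReal, mul_one, Complex.norm_real]
    exact abs_one_sub_sq_pow_le_one ht j
  exact (intervalIntegral.norm_integral_le_of_norm_le_const hbound).trans (by norm_num)

lemma norm_fourierTruncPow_le (j : ℕ) (k ρ : ℝ) :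
    ‖fourierTruncPow j k ρ‖ ≤ 2 * |ρ| ^ (2 * j + 1) := by
  rw [fourierTruncPow_eq_mul_one, norm_mul, norm_pow, Complex.norm_real, Real.norm_eq_abs, mul_comm]
  gcongr
  exact norm_fourierTruncPow_one_le j _

lemma hasDerivAt_fourierTruncPow_one (j : ℕ) (s : ℝ) :
    HasDerivAt (fun s => fourierTruncPow j s 1)
      (∫ t in -1..1, (((1 ^ 2 - t ^ 2) ^ j : ℝ) : ℂ) * (-Complex.I * t) *
        Complex.exp (-Complex.I * (s * t : ℝ))) s := by
  refine (intervalIntegral.hasDerivAt_integral_of_dominated_loc_of_deriv_le (bound := fun _ => 1)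
    (F := fun s t => (((1 ^ 2 - t ^ 2) ^ j : ℝ) : ℂ) * Complex.exp (-Complex.I * (s * t : ℝ)))
    (F' := fun s t => (((1 ^ 2 - t ^ 2) ^ j : ℝ) : ℂ) * (-Complex.I * t) *
      Complex.exp (-Complex.I * (s * t : ℝ)))
    Filter.univ_mem (.of_forall fun _ => (by fun_prop : Continuous _).aestronglyMeasurable)
    ((by fun_prop : Continuous _).intervalIntegrable _ _)
    (by fun_prop : Continuous _).aestronglyMeasurable (ae_of_all _ fun t ht x _ => ?_)
    intervalIntegrable_const (ae_of_all _ fun t _ x _ => ?_)).2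
  · have ht' : |t| ≤ 1 := by
      rw [uIoc_of_le (by norm_num)] at ht; exact abs_le.2 ⟨ht.1.le, ht.2⟩
    rw [norm_mul, norm_mul, norm_exp_neg_I_mul_ofReal, Complex.norm_real, norm_mul, norm_neg,
      Complex.norm_I, Complex.norm_real, Real.norm_eq_abs, Real.norm_eq_abs]
    nlinarith [abs_one_sub_sq_pow_le_one ht j, abs_nonneg t, abs_nonneg ((1 ^ 2 - t ^ 2) ^ j)]
  · have := (((hasDerivAt_id x).mul_const t).ofReal_comp.const_mul (-Complex.I)).cexp.const_mul
      ((((1 ^ 2 - t ^ 2) ^ j : ℝ) : ℂ))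
    refine this.congr_deriv ?_
    simp only [id, one_mul]
    push_cast
    ring

lemma mul_deriv_fourierTruncPow_one (j : ℕ) (s : ℝ) :
    (s : ℂ) * ∫ t in -1..1, (((1 ^ 2 - t ^ 2) ^ (j + 1) : ℝ) : ℂ) * (-Complex.I * t) *
        Complex.exp (-Complex.I * (s * t : ℝ)) =
      2 * (j + 1) * fourierTruncPow j s 1 - (2 * j + 3) * fourierTruncPow (j + 1) s 1 := by
  have hu : ∀ t : ℝ, HasDerivAt (fun t : ℝ => (((1 ^ 2 - t ^ 2) ^ (j + 1) * t : ℝ) : ℂ))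
      (((1 ^ 2 - t ^ 2) ^ (j + 1) - 2 * (j + 1) * t ^ 2 * (1 ^ 2 - t ^ 2) ^ j : ℝ) : ℂ) t := by
    intro t
    refine ((((hasDerivAt_pow 2 t).const_sub (1 ^ 2)).fun_pow (j + 1)).fun_mul
      (hasDerivAt_id' t)).ofReal_comp.congr_deriv ?_
    push_cast
    ring
  have hv : ∀ t : ℝ, HasDerivAt (fun t : ℝ => Complex.exp (-Complex.I * (s * t : ℝ)))
      (-Complex.I * s * Complex.exp (-Complex.I * (s * t : ℝ))) t := by
    intro t
    refine (((hasDerivAt_id t).const_mul s).ofReal_comp.const_mul (-Complex.I)).cexp.congr_deriv ?_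
    simp only [id]
    push_cast
    ring
  have hIBP := intervalIntegral.integral_deriv_mul_eq_sub (a := -1) (b := 1) (fun t _ => hu t)
    (fun t _ => hv t) ((by fun_prop : Continuous _).intervalIntegrable _ _)
    ((by fun_prop : Continuous _).intervalIntegrable _ _)
  replace hIBP := hIBP.trans (by simp : _ = (0 : ℂ))
  rw [← sub_eq_zero, ← hIBP, fourierTruncPow, fourierTruncPow,
    ← intervalIntegral.integral_const_mul, ← intervalIntegral.integral_const_mul,
    ← intervalIntegral.integral_const_mul, ← intervalIntegral.integral_sub,
    ← intervalIntegral.integral_sub]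
  · refine intervalIntegral.integral_congr fun t _ => ?_
    push_cast
    ring
  all_goals exact (by fun_prop : Continuous _).intervalIntegrable _ _

lemma hasDerivAt_fourierTruncPow (j : ℕ) (k ρ : ℝ) :
    HasDerivAt (fourierTruncPow (j + 1) k) (2 * (j + 1) * ρ * fourierTruncPow j k ρ) ρ := by
  rw [funext (fourierTruncPow_eq_mul_one (j + 1) k)]
  refine ((hasDerivAt_pow _ (ρ : ℂ)).comp_ofReal.mul
    ((hasDerivAt_fourierTruncPow_one (j + 1) (k * ρ)).scomp ρ
      ((hasDerivAt_id ρ).const_mul k))).congr_deriv ?_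
  have h := mul_deriv_fourierTruncPow_one j (k * ρ)
  rw [fourierTruncPow_eq_mul_one j k ρ, Complex.real_smul, Function.comp_apply]
  push_cast at h ⊢
  linear_combination (ρ : ℂ) ^ (2 * j + 2) * h

lemma continuous_fourierTruncPow (j : ℕ) (ρ : ℝ) : Continuous fun k => fourierTruncPow j k ρ :=
  intervalIntegral.continuous_parametric_intervalIntegral_of_continuous' (by fun_prop) _ _

lemma fourierTruncPow_zero (k R : ℝ) :
    fourierTruncPow 0 k R = 2 * if k = 0 then (R : ℂ) else ((Real.sin (R * k) / k : ℝ) : ℂ) := by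
  simp only [fourierTruncPow, pow_zero, Complex.ofReal_one, one_mul]
  split_ifs with hk
  · simp only [hk, zero_mul, Complex.ofReal_zero, mul_zero, Complex.exp_zero,
      intervalIntegral.integral_const, sub_neg_eq_add, Complex.real_smul, Complex.ofReal_add,
      mul_one]
    ring
  · have hc : -Complex.I * k ≠ 0 := by simp [hk]
    simp_rw [Complex.ofReal_mul, ← mul_assoc]
    rw [integral_exp_mul_complex hc]
    push_cast
    rw [Complex.sin]
    field_simp
    ring_nf
    rw [Complex.I_sq]
    ring

lemma fourierTf_one_div_sqrt_sub_norm_sq (m : ℕ) {ρ : ℝ} (hρ : 0 ≤ ρ)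
    (ξ : EuclideanSpace ℝ (Fin (2 * m + 2))) :
    fourierTf (fun x => ((1 / √(ρ ^ 2 - ‖x‖ ^ 2) : ℝ) : ℂ)) ξ =
      Real.pi * unitBallVol (2 * m) * fourierTruncPow m ‖ξ‖ ρ := by
  have hrot := integral_comp_norm_inner
    (fun r s => ((1 / √(ρ ^ 2 - r ^ 2) : ℝ) : ℂ) * Complex.exp (-Complex.I * s)) ξ
  have hslice := integral_one_div_sqrt_sub_norm_sq_mul_apply_zero (2 * m) hρ
    (g := fun t => Complex.exp (-Complex.I * (‖ξ‖ * t : ℝ))) (by fun_prop)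
    (fun t => (norm_exp_neg_I_mul_ofReal _).le)
  rw [fourierTf, hrot, hslice, fourierTruncPow]
  congr 1
  refine intervalIntegral.integral_congr fun t ht => ?_
  have : 0 ≤ ρ ^ 2 - t ^ 2 := by
    rw [uIcc_of_le (by linarith)] at ht
    nlinarith [ht.1, ht.2]
  simp only [pow_mul, Real.sq_sqrt this]

lemma setIntegral_ball_mul_fourierTf_eq (m : ℕ) {ρ : ℝ} (hρ : 0 < ρ)
    {φ : EuclideanSpace ℝ (Fin (2 * m + 2)) → ℂ} (hφ : Integrable φ) :
    1 / (unitBallVol (2 * m + 2) : ℂ) *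
        ∫ x in ball 0 ρ, ((1 / √(ρ ^ 2 - ‖x‖ ^ 2) : ℝ) : ℂ) * fourierTf φ x =
      (m + 1) * ∫ ξ, φ ξ * fourierTruncPow m ‖ξ‖ ρ := by
  have hout : ∀ x ∉ ball (0 : EuclideanSpace ℝ (Fin (2 * m + 2))) ρ,
      ((1 / √(ρ ^ 2 - ‖x‖ ^ 2) : ℝ) : ℂ) * fourierTf φ x = 0 := by
    intro x hx
    rw [mem_ball_zero_iff, not_lt] at hx
    rw [one_div_sqrt_of_nonpos (by nlinarith [norm_nonneg x]), Complex.ofReal_zero, zero_mul]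
  have hw : Integrable fun x : EuclideanSpace ℝ (Fin (2 * m + 2)) =>
      ((1 / √(ρ ^ 2 - ‖x‖ ^ 2) : ℝ) : ℂ) :=
    (integrable_one_div_sqrt_sub_norm_sq (2 * m + 1) _).ofReal
  rw [setIntegral_eq_integral_of_forall_compl_eq_zero hout, integral_mul_fourierTf hw hφ]
  simp_rw [fourierTf_one_div_sqrt_sub_norm_sq m hρ.le, mul_left_comm (φ _), integral_const_mul]
  have hc := congrArg (fun r : ℝ => (r : ℂ)) (pi_mul_unitBallVol_div m)
  push_cast at hc
  rw [← hc]
  ring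

lemma hasDerivAt_integral_mul_fourierTruncPow {α : Type*} [MeasurableSpace α] {μ : Measure α}
    {ψ : α → ℂ} (hψ : Integrable ψ μ) {κ : α → ℝ} (hκ : Measurable κ) (j : ℕ) (ρ : ℝ) :
    HasDerivAt (fun r => ∫ a, ψ a * fourierTruncPow (j + 1) (κ a) r ∂μ)
      (2 * (j + 1) * ρ * ∫ a, ψ a * fourierTruncPow j (κ a) ρ ∂μ) ρ := by
  have hmeas : ∀ i r, AEStronglyMeasurable (fun a => fourierTruncPow i (κ a) r) μ :=
    fun i r => ((continuous_fourierTruncPow i r).measurable.comp hκ).aestronglyMeasurable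
  set c : ℂ := 2 * (j + 1)
  have hbound : ∀ a, ∀ r ∈ ball ρ 1, ‖ψ a * (c * r * fourierTruncPow j (κ a) r)‖ ≤
      ‖c‖ * (2 * (|ρ| + 1) ^ (2 * j + 2)) * ‖ψ a‖ := by
    intro a r hr
    have hr' : |r| ≤ |ρ| + 1 := by
      have := abs_sub_abs_le_abs_sub r ρ
      rw [mem_ball, Real.dist_eq] at hr
      linarith
    have hG := norm_fourierTruncPow_le j (κ a) r
    have hrG : |r| * ‖fourierTruncPow j (κ a) r‖ ≤ 2 * (|ρ| + 1) ^ (2 * j + 2) :=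
      calc |r| * ‖fourierTruncPow j (κ a) r‖ ≤ |r| * (2 * |r| ^ (2 * j + 1)) := by gcongr
        _ = 2 * |r| ^ (2 * j + 2) := by ring
        _ ≤ 2 * (|ρ| + 1) ^ (2 * j + 2) := by gcongr
    rw [norm_mul, norm_mul, norm_mul, Complex.norm_real, Real.norm_eq_abs]
    calc ‖ψ a‖ * (‖c‖ * |r| * ‖fourierTruncPow j (κ a) r‖)
        = ‖c‖ * (|r| * ‖fourierTruncPow j (κ a) r‖) * ‖ψ a‖ := by ring
      _ ≤ _ := by gcongr
  have key := hasDerivAt_integral_of_dominated_loc_of_deriv_le (ball_mem_nhds ρ one_pos)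
    (F := fun r a => ψ a * fourierTruncPow (j + 1) (κ a) r)
    (F' := fun r a => ψ a * (c * r * fourierTruncPow j (κ a) r))
    (bound := fun a => ‖c‖ * (2 * (|ρ| + 1) ^ (2 * j + 2)) * ‖ψ a‖)
    (.of_forall fun r => hψ.1.mul (hmeas _ r))
    (hψ.mul_bdd (hmeas _ ρ) (ae_of_all _ fun a => norm_fourierTruncPow_le _ _ ρ))
    (hψ.1.mul ((hmeas j ρ).const_mul _))
    (ae_of_all _ fun a r hr => hbound a r hr) (hψ.norm.const_mul _)
    (ae_of_all _ fun a r _ => (hasDerivAt_fourierTruncPow j (κ a) r).const_mul (ψ a))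
  rw [← integral_const_mul]
  refine key.2.congr_deriv (integral_congr_ae (ae_of_all _ fun a => ?_))
  simp only
  ring

lemma iterate_invRDerivC_const_mul (c : ℂ) (f : ℝ → ℂ) (i : ℕ) :
    invRDerivC^[i] (fun r => c * f r) = fun r => c * invRDerivC^[i] f r := by
  induction i generalizing f with
  | zero => rfl
  | succ i ih =>
    rw [Function.iterate_succ_apply, Function.iterate_succ_apply, ← ih]
    congr 1
    funext r
    simp only [invRDerivC, deriv_const_mul_field', mul_div_assoc]

lemma eqOn_iterate_invRDerivC {f g : ℝ → ℂ} {U : Set ℝ} (hU : IsOpen U) (h : EqOn f g U)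
    (i : ℕ) : EqOn (invRDerivC^[i] f) (invRDerivC^[i] g) U := by
  induction i with
  | zero => exact h
  | succ i ih =>
    intro r hr
    rw [Function.iterate_succ_apply', Function.iterate_succ_apply', invRDerivC, invRDerivC,
      (Filter.eventuallyEq_of_mem (hU.mem_nhds hr) ih).deriv_eq]

open scoped Nat in
lemma iterate_invRDerivC_eqOn_of_hasDerivAt {F : ℕ → ℝ → ℂ}
    (hF : ∀ j ρ, ρ ≠ 0 → HasDerivAt (F (j + 1)) (2 * (j + 1) * ρ * F j ρ) ρ) (i : ℕ) :
    EqOn (invRDerivC^[i] (F i)) (fun ρ => 2 ^ i * i ! * F 0 ρ) {0}ᶜ := by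
  induction i with
  | zero => intro ρ _; simp
  | succ i ih =>
    have hstep : EqOn (invRDerivC (F (i + 1))) (fun r => 2 * (i + 1) * F i r) {0}ᶜ := by
      intro r hr
      rw [invRDerivC, (hF i r hr).deriv]
      field_simp [Complex.ofReal_ne_zero.2 hr]
    intro ρ hρ
    rw [Function.iterate_succ_apply, eqOn_iterate_invRDerivC isOpen_compl_singleton hstep i hρ,
      iterate_invRDerivC_const_mul]
    simp only [ih hρ, Nat.factorial_succ]
    push_cast
    ring

end TRFourier

open TRFourier Set in
/-- For even `n ≥ 2`, `d_n⁻¹ = n(n−2)⋯2`, `R > 0` and a Schwartz function `φ`,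
`d_n ((1/R)(∂/∂R))^{(n−2)/2} ( (1/vₙ) ∫_{B(0,R)} (R² − |x|²)^{−1/2} φ̂(x) dx )
  = ∫_{ℝⁿ} (sin(R|ξ|)/|ξ|) φ(ξ) dξ`,
with `sin(R|ξ|)/|ξ|` interpreted as `R` at `ξ = 0`. -/
theorem fourier_transform_of_T_R_even (n : ℕ) (hn : 2 ≤ n) (heven : Even n)
    (d : ℝ) (hd : d⁻¹ = (Nat.doubleFactorial n : ℝ)) (R : ℝ) (hR : 0 < R)
    (φ : SchwartzMap (EuclideanSpace ℝ (Fin n)) ℂ) :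
    (d : ℂ) *
        invRDerivC^[(n - 2) / 2]
          (fun ρ : ℝ => (1 / (unitBallVol n : ℂ)) *
            ∫ x in ball (0 : EuclideanSpace ℝ (Fin n)) ρ,
              ((1 / Real.sqrt (ρ ^ 2 - ‖x‖ ^ 2) : ℝ) : ℂ) * fourierTf (fun y => φ y) x) R =
      ∫ ξ : EuclideanSpace ℝ (Fin n),
        (if ξ = 0 then (R : ℂ) else ((Real.sin (R * ‖ξ‖) / ‖ξ‖ : ℝ) : ℂ)) * φ ξ := by
  obtain ⟨m, rfl⟩ : ∃ m, n = 2 * m + 2 := by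
    obtain ⟨k, hk⟩ := heven
    exact ⟨k - 1, by omega⟩
  set Ψ : ℕ → ℝ → ℂ := fun j ρ => ∫ ξ, φ ξ * fourierTruncPow j ‖ξ‖ ρ
  have hΨ (j : ℕ) (ρ : ℝ) (_ : ρ ≠ 0) : HasDerivAt (Ψ (j + 1)) (2 * (j + 1) * ρ * Ψ j ρ) ρ :=
    hasDerivAt_integral_mul_fourierTruncPow φ.integrable continuous_norm.measurable j ρ
  have hd' : (d : ℂ) * (2 ^ m * m.factorial * (m + 1) * 2) = 1 := by
    rw [show 2 * m + 2 = 2 * (m + 1) by ring, Nat.doubleFactorial_two_mul,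
      Nat.factorial_succ] at hd
    rw [← inv_inv d, hd]
    push_cast
    field_simp [(Nat.cast_ne_zero (R := ℂ)).2 m.factorial_ne_zero]
    ring
  rw [show (2 * m + 2 - 2) / 2 = m by omega, eqOn_iterate_invRDerivC isOpen_Ioi
    (fun ρ hρ => setIntegral_ball_mul_fourierTf_eq m hρ φ.integrable) m hR,
    iterate_invRDerivC_const_mul]
  beta_reduce
  rw [iterate_invRDerivC_eqOn_of_hasDerivAt hΨ m hR.ne']
  simp only [Ψ, fourierTruncPow_zero, norm_eq_zero, ← integral_const_mul]
  refine integral_congr_ae (ae_of_all _ fun ξ => ?_)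
  linear_combination (φ ξ * if ξ = 0 then (R : ℂ) else ((Real.sin (R * ‖ξ‖) / ‖ξ‖ : ℝ) : ℂ)) * hd'
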